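/- Let μ_p be a distribution on ℝ × {−1,+1} and b_p a bias such that the first-order optimality condition g(b_p) = −ε·(d/db)L(h_{1,b}; μ_p)|_{b=b_p} holds, where (d/db)ℓ(h_{1,b}; x, y) ∈ [−1, 1] pointwise. Then g(b_p) ∈ [−ε, ε]. Conversely, given any b with g(b) ∈ [−ε, ε], setting α = 1/2 + g(b)/(2ε) ∈ [0, 1], the two-point distribution ν_α (mass α at (−u,+1), mass 1−α at (u,−1), with |b| ≤ u so both points are within margin) satisfies g(b) = −ε·(d/db)L(h_{1,b}; ν_α) = ε(2α − 1), i.e., b satisfies the first-order optimality condition for the poisoned objective with μ_p = ν_α. -/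

import Mathlib

/-!
A poisoned point `(x, y)` with `y = ±1` moves the hinge loss by at most `|Δb|` when the bias
moves by `Δb`, so the population risk is `1`-Lipschitz in `b` and its derivative lies in
`[-1, 1]`; hence `g(b_p) = -ε D` lies in `[-ε, ε]`. Conversely, when `|b| ≤ u` both atoms of
`ν_α` are strictly inside the margin near `b`, so the risk is affine there with slope
`α · (-1) + (1 - α) · 1 = 1 - 2α`, and `α` is chosen to make `-ε (1 - 2α) = g(b)`.
-/

open MeasureTheory

/-- The two-point distribution `ν_α`: mass `α` on `(−u, +1)` and mass `1−α` on `(u, −1)`. -/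
noncomputable def nuTwo (u α : ℝ) : Measure (ℝ × ℝ) :=
  ENNReal.ofReal α • Measure.dirac ((-u, 1) : ℝ × ℝ) +
  ENNReal.ofReal (1 - α) • Measure.dirac ((u, -1) : ℝ × ℝ)

section LipschitzIntegral

variable {X Ω E : Type*} [PseudoMetricSpace X] [MeasurableSpace Ω] [NormedAddCommGroup E]
  {μ : Measure Ω} {f : X → Ω → E} {K : NNReal}

theorem integrable_iff_of_ae_dist_le [IsFiniteMeasure μ]
    (hf_meas : ∀ x, AEStronglyMeasurable (f x) μ)
    (hf : ∀ x y, ∀ᵐ ω ∂μ, dist (f x ω) (f y ω) ≤ K * dist x y) (x y : X) :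
    Integrable (f x) μ ↔ Integrable (f y) μ := by
  have hdiff : Integrable (f x - f y) μ :=
    .of_bound ((hf_meas x).sub (hf_meas y)) (K * dist x y) <| by
      filter_upwards [hf x y] with ω hω
      rwa [Pi.sub_apply, ← dist_eq_norm]
  constructor
  · intro hx
    simpa using hx.sub hdiff
  · intro hy
    simpa using hdiff.add hy

/-- If some `f x` is not integrable then none is, and the integral is identically `0`. -/
theorem lipschitzWith_integral_of_ae_dist_le [NormedSpace ℝ E] [IsProbabilityMeasure μ]
    (hf_meas : ∀ x, AEStronglyMeasurable (f x) μ)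
    (hf : ∀ x y, ∀ᵐ ω ∂μ, dist (f x ω) (f y ω) ≤ K * dist x y) :
    LipschitzWith K fun x => ∫ ω, f x ω ∂μ := by
  refine .of_dist_le_mul fun x y => ?_
  by_cases hx : Integrable (f x) μ
  · have hy := (integrable_iff_of_ae_dist_le hf_meas hf x y).mp hx
    rw [dist_eq_norm, ← integral_sub hx hy]
    simpa using norm_integral_le_of_norm_le_const (μ := μ) <| by
      filter_upwards [hf x y] with ω hω
      rwa [← dist_eq_norm]
  · have hy := mt (integrable_iff_of_ae_dist_le hf_meas hf x y).mpr hx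
    rw [integral_undef hx, integral_undef hy, dist_self]
    positivity

end LipschitzIntegral

/-- The population hinge risk `L(h_{1,b}; μ)` of the classifier `x ↦ x + b`. -/
noncomputable def hingeRisk (μ : Measure (ℝ × ℝ)) (b : ℝ) : ℝ :=
  ∫ z, max 0 (1 - z.2 * (z.1 + b)) ∂μ

theorem abs_hinge_sub_hinge_le {x y : ℝ} (hy : y = 1 ∨ y = -1) (b₁ b₂ : ℝ) :
    |max 0 (1 - y * (x + b₁)) - max 0 (1 - y * (x + b₂))| ≤ |b₁ - b₂| := by
  rw [max_comm 0, max_comm 0]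
  refine (abs_max_sub_max_le_abs _ _ 0).trans_eq ?_
  rw [show 1 - y * (x + b₁) - (1 - y * (x + b₂)) = y * (b₂ - b₁) by ring, abs_mul,
    abs_sub_comm]
  rcases hy with rfl | rfl <;> simp

theorem lipschitzWith_hingeRisk {μ : Measure (ℝ × ℝ)} [IsProbabilityMeasure μ]
    (hlabel : ∀ᵐ z ∂μ, z.2 = 1 ∨ z.2 = -1) : LipschitzWith 1 (hingeRisk μ) :=
  lipschitzWith_integral_of_ae_dist_le
    (fun _ => (continuous_const.max (by fun_prop)).aestronglyMeasurable)
    fun b₁ b₂ => by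
      filter_upwards [hlabel] with z hz
      simpa [Real.dist_eq] using abs_hinge_sub_hinge_le hz b₁ b₂

theorem abs_le_one_of_hasDerivAt_hingeRisk {μ : Measure (ℝ × ℝ)} [IsProbabilityMeasure μ]
    (hlabel : ∀ᵐ z ∂μ, z.2 = 1 ∨ z.2 = -1) {b D : ℝ} (hD : HasDerivAt (hingeRisk μ) D b) :
    |D| ≤ 1 := by
  simpa using hD.le_of_lipschitz (lipschitzWith_hingeRisk hlabel)

theorem integral_nuTwo {u α : ℝ} (hα₀ : 0 ≤ α) (hα₁ : α ≤ 1) (f : ℝ × ℝ → ℝ) :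
    ∫ z, f z ∂(nuTwo u α) = α * f (-u, 1) + (1 - α) * f (u, -1) := by
  have hint (c : ℝ) (p : ℝ × ℝ) : Integrable f (ENNReal.ofReal c • Measure.dirac p) :=
    (integrable_dirac (by simp)).smul_measure ENNReal.ofReal_ne_top
  rw [nuTwo, integral_add_measure (hint _ _) (hint _ _), integral_smul_measure,
    integral_smul_measure, integral_dirac, integral_dirac,
    ENNReal.toReal_ofReal hα₀, ENNReal.toReal_ofReal (sub_nonneg.mpr hα₁), smul_eq_mul, smul_eq_mul]

theorem hingeRisk_nuTwo_of_abs_lt {u α b : ℝ} (hα₀ : 0 ≤ α) (hα₁ : α ≤ 1) (hb : |b| < 1 + u) :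
    hingeRisk (nuTwo u α) b = α * (1 + u - b) + (1 - α) * (1 + u + b) := by
  rw [abs_lt] at hb
  rw [hingeRisk, integral_nuTwo hα₀ hα₁, max_eq_right (by linarith), max_eq_right (by linarith)]
  ring

theorem hasDerivAt_hingeRisk_nuTwo {u α b : ℝ} (hα₀ : 0 ≤ α) (hα₁ : α ≤ 1) (hb : |b| ≤ u) :
    HasDerivAt (hingeRisk (nuTwo u α)) (1 - 2 * α) b := by
  have haffine : HasDerivAt (fun b' => α * (1 + u - b') + (1 - α) * (1 + u + b')) (1 - 2 * α) b :=
    ((((hasDerivAt_id' b).const_sub (1 + u)).const_mul α).add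
      (((hasDerivAt_id' b).const_add (1 + u)).const_mul (1 - α))).congr_deriv (by ring)
  refine haffine.congr_of_eventuallyEq ?_
  have hnhds : ∀ᶠ b' in nhds b, |b'| < 1 + u :=
    continuous_abs.continuousAt.eventually_lt continuousAt_const (by linarith)
  filter_upwards [hnhds] with b' hb'
  exact hingeRisk_nuTwo_of_abs_lt hα₀ hα₁ hb'

theorem stmt19_general (g : ℝ → ℝ) (ε u : ℝ) (hε : 0 < ε) :
    -- Part 1: first-order optimality for the poisoned objective forces g(b_p) ∈ [−ε, ε]
    (∀ (μp : Measure (ℝ × ℝ)), IsProbabilityMeasure μp →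
      μp ({z : ℝ × ℝ | z.2 = 1 ∨ z.2 = -1})ᶜ = 0 →
      ∀ (bp D : ℝ),
        HasDerivAt (fun b => ∫ z, max 0 (1 - z.2 * (z.1 + b)) ∂μp) D bp →
        g bp = -ε * D →
        -ε ≤ g bp ∧ g bp ≤ ε) ∧
    -- Part 2: conversely, ν_α with α = 1/2 + g(b)/(2ε) realizes the optimality condition
    (∀ b : ℝ, -ε ≤ g b → g b ≤ ε → |b| ≤ u →
      let α := 1 / 2 + g b / (2 * ε)
      0 ≤ α ∧ α ≤ 1 ∧
      HasDerivAt (fun b' => ∫ z, max 0 (1 - z.2 * (z.1 + b')) ∂(nuTwo u α)) (1 - 2 * α) b ∧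
      g b = -ε * (1 - 2 * α) ∧ g b = ε * (2 * α - 1)) := by
  refine ⟨fun μp _ hlabel bp D hD hg => ?_, fun b hlo hhi hb => ?_⟩
  · obtain ⟨hD₀, hD₁⟩ := abs_le.mp (abs_le_one_of_hasDerivAt_hingeRisk (ae_iff.mpr hlabel) hD)
    rw [hg]
    constructor <;> nlinarith
  · intro α
    have hgα : g b = ε * (2 * α - 1) := by
      simp only [α]
      field_simp
      ring
    have hα₀ : 0 ≤ α := by nlinarith
    have hα₁ : α ≤ 1 := by nlinarith
    exact ⟨hα₀, hα₁, hasDerivAt_hingeRisk_nuTwo hα₀ hα₁ hb, by rw [hgα]; ring, hgα⟩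

theorem stmt19 (g : ℝ → ℝ) (ε u : ℝ) (hε : 0 < ε) (hu : 0 < u) :
    -- Part 1: first-order optimality for the poisoned objective forces g(b_p) ∈ [−ε, ε]
    (∀ (μp : Measure (ℝ × ℝ)), IsProbabilityMeasure μp →
      μp ({z : ℝ × ℝ | z.2 = 1 ∨ z.2 = -1})ᶜ = 0 →
      ∀ (bp D : ℝ),
        HasDerivAt (fun b => ∫ z, max 0 (1 - z.2 * (z.1 + b)) ∂μp) D bp →
        g bp = -ε * D →
        -ε ≤ g bp ∧ g bp ≤ ε) ∧
    -- Part 2: conversely, ν_α with α = 1/2 + g(b)/(2ε) realizes the optimality condition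
    (∀ b : ℝ, -ε ≤ g b → g b ≤ ε → |b| ≤ u →
      let α := 1 / 2 + g b / (2 * ε)
      0 ≤ α ∧ α ≤ 1 ∧
      HasDerivAt (fun b' => ∫ z, max 0 (1 - z.2 * (z.1 + b')) ∂(nuTwo u α)) (1 - 2 * α) b ∧
      g b = -ε * (1 - 2 * α) ∧ g b = ε * (2 * α - 1)) :=
  stmt19_general g ε u hε
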